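/- Let Q be the cyclic quiver of type Ã_{n−1} with vertices 1, ..., n and arrows a_i from i to i+1 (indices modulo n), and let γ be any k^×-valued function on the edges of the double Q̄. Then the modified preprojective algebra Π^γ_Q(k), with relations γ_{a_i^*} a_i^* a_i − γ_{a_{i−1}} a_{i−1} a_{i−1}^* = 0 at each vertex i, is spanned as a k-vector space by the paths in Q̄ containing no subexpression a_i^* a_i; consequently h_{Π^γ_Q(k)}(t) ≤ (1 − Ct + t²)^{-1} termwise, where C is the adjacency matrix of Q̄. -/

import Mathlib

noncomputable section

open scoped DirectSum TensorProduct

/-- A finite quiver: finite sets of vertices and of edges, with head and tail maps.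
Multiple edges and self-loops are allowed. -/
structure FinQuiver where
  I : Type
  E : Type
  [fintypeI : Fintype I]
  [decEqI : DecidableEq I]
  [fintypeE : Fintype E]
  hd : E → I
  tl : E → I

attribute [instance] FinQuiver.fintypeI FinQuiver.decEqI FinQuiver.fintypeE

namespace FinQuiver

variable (Q : FinQuiver)

/-- Edges of the double quiver `Q̄`: for each edge `a` of `Q` (`Sum.inl a`),
a reverse edge `a*` (`Sum.inr a`). -/
abbrev DE := Q.E ⊕ Q.E

/-- Head (target) of an edge of the double quiver. -/
def dhd : Q.DE → Q.I := Sum.elim Q.hd Q.tl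

/-- Tail (source) of an edge of the double quiver. -/
def dtl : Q.DE → Q.I := Sum.elim Q.tl Q.hd

/-- The adjacency matrix `C` of the double quiver `Q̄` (with rational entries):
`C i j` is the number of edges of `Q̄` from `j` to `i`. -/
def adjC : Matrix Q.I Q.I ℚ :=
  Matrix.of fun i j => (Nat.card {b : Q.DE // Q.dhd b = i ∧ Q.dtl b = j} : ℚ)

/-- The number of edges between `i` and `j` in the underlying (undirected) graph of `Q`;
for `i = j` this is the number of self-loops at `i`. -/
def edgeCount (i j : Q.I) : ℕ :=
  Nat.card {a : Q.E // (Q.hd a = i ∧ Q.tl a = j) ∨ (Q.hd a = j ∧ Q.tl a = i)}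

/-- Two vertices are adjacent if some edge joins them (in either direction). -/
def Adjacent (i j : Q.I) : Prop :=
  ∃ a : Q.E, (Q.hd a = i ∧ Q.tl a = j) ∨ (Q.hd a = j ∧ Q.tl a = i)

/-- A quiver is connected if it is nonempty and any two vertices are joined by a walk
in the underlying graph. -/
def Connected : Prop :=
  Nonempty Q.I ∧ ∀ i j : Q.I, Relation.ReflTransGen Q.Adjacent i j

end FinQuiver

namespace FinQuiver

variable (k : Type) [CommRing k] (Q : FinQuiver)

/-- Generators of the path algebra of the double quiver: one idempotent generator for each
vertex, and one generator for each edge of the double quiver. -/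
abbrev Gen := Q.I ⊕ Q.DE

/-- The free algebra on the generators. -/
abbrev FA := FreeAlgebra k Q.Gen

/-- The vertex idempotent generator. -/
def eF (i : Q.I) : Q.FA k := FreeAlgebra.ι k (Sum.inl i)

/-- The edge generator. -/
def aF (b : Q.DE) : Q.FA k := FreeAlgebra.ι k (Sum.inr b)

/-- The preprojective relation at the vertex `i`:
`∑_{a ∈ Q, h(a) = i} a a* − ∑_{a ∈ Q, t(a) = i} a* a`. -/
def preprojector (i : Q.I) : Q.FA k :=
  (∑ a : {a : Q.E // Q.hd a = i}, Q.aF k (Sum.inl a.1) * Q.aF k (Sum.inr a.1)) -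
  (∑ a : {a : Q.E // Q.tl a = i}, Q.aF k (Sum.inr a.1) * Q.aF k (Sum.inl a.1))

/-- Relations defining the partial preprojective algebra `Π_{Q,J}`: the vertex generators are
orthogonal idempotents summing to `1`, each edge generator `b` of the double quiver satisfies
`b = e_{h(b)} b e_{t(b)}`, and the preprojective relation is imposed at every vertex
not belonging to `J`. -/
inductive PPRel (J : Set Q.I) : Q.FA k → Q.FA k → Prop
  | idem (i j : Q.I) : PPRel J (Q.eF k i * Q.eF k j) (if i = j then Q.eF k i else 0)
  | unit : PPRel J (∑ i : Q.I, Q.eF k i) 1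
  | comp (b : Q.DE) : PPRel J (Q.aF k b) (Q.eF k (Q.dhd b) * Q.aF k b * Q.eF k (Q.dtl b))
  | pre (i : Q.I) (h : i ∉ J) : PPRel J (Q.preprojector k i) 0

/-- The partial preprojective algebra `Π_{Q,J}(k)`, the quotient of the path algebra of the
double quiver `Q̄` by the preprojective relations imposed at the vertices not in `J`.
For `J = ∅` this is the preprojective algebra `Π_Q(k)`. -/
abbrev PPA (J : Set Q.I) := RingQuot (Q.PPRel k J)

/-- The quotient map from the free algebra onto `Π_{Q,J}(k)`. -/
def ppMk (J : Set Q.I) : Q.FA k →ₐ[k] Q.PPA k J := RingQuot.mkAlgHom k (Q.PPRel k J)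

/-- The product of a list of edge generators in the free algebra. -/
def wordF (l : List Q.DE) : Q.FA k := (l.map (Q.aF k)).prod

/-- The component `e_i Π_{Q,J}(k)[d] e_j` of the grading of `Π_{Q,J}(k)` in which the edges
have degree `1`: the span of (the images of) all paths of length `d` from `j` to `i`. -/
def ppPiece (J : Set Q.I) (d : ℕ) (i j : Q.I) : Submodule k (Q.PPA k J) :=
  Submodule.span k
    {x | ∃ l : List Q.DE, l.length = d ∧ x = Q.ppMk k J (Q.eF k i * Q.wordF k l * Q.eF k j)}

/-- The Hilbert series of `Π_{Q,J}(k)`, a matrix-valued power series: the `(i,j)` entry of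
the `d`-th coefficient is `dim_k e_i Π_{Q,J}(k)[d] e_j`. -/
def ppHilb (J : Set Q.I) : PowerSeries (Matrix Q.I Q.I ℚ) :=
  PowerSeries.mk fun d => Matrix.of fun i j => (Module.finrank k (Q.ppPiece k J d i j) : ℚ)

end FinQuiver

/-- The diagonal matrix `D_J` with `(D_J)_{ii} = 0` for `i ∈ J` and `(D_J)_{ii} = 1`
for `i ∉ J`. -/
def DJmat {ι : Type} (J : Set ι) : Matrix ι ι ℚ :=
  open scoped Classical in Matrix.of fun i j => if i = j ∧ i ∉ J then 1 else 0

namespace FinQuiver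

variable (k : Type) [CommRing k] (Q : FinQuiver) (J : Set Q.I)

/-- The edges of the double quiver which begin or end at a vertex of `I ∖ J`. -/
abbrev GamEdge := {b : Q.DE // Q.dhd b ∉ J ∨ Q.dtl b ∉ J}

/-- The modified preprojective relation at a vertex `i ∉ J`, with coefficients `γ`:
`∑_{a ∈ Q, h(a) = i} γ_a a a* − ∑_{a ∈ Q, t(a) = i} γ_{a*} a* a`. -/
def preprojectorGam (γ : Q.GamEdge J → kˣ) (i : Q.I) (hi : i ∉ J) : Q.FA k :=
  (∑ a : {a : Q.E // Q.hd a = i},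
      ((γ ⟨Sum.inl a.1, Or.inl (by
          rw [show Q.dhd (Sum.inl a.1) = Q.hd a.1 from rfl, a.2]; exact hi)⟩ : kˣ) : k) •
        (Q.aF k (Sum.inl a.1) * Q.aF k (Sum.inr a.1))) -
  (∑ a : {a : Q.E // Q.tl a = i},
      ((γ ⟨Sum.inr a.1, Or.inl (by
          rw [show Q.dhd (Sum.inr a.1) = Q.tl a.1 from rfl, a.2]; exact hi)⟩ : kˣ) : k) •
        (Q.aF k (Sum.inr a.1) * Q.aF k (Sum.inl a.1)))

/-- Relations defining the modified partial preprojective algebra `Π^γ_{Q,J}(k)`: the vertex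
generators are orthogonal idempotents summing to `1`, each edge generator `b` of the double
quiver satisfies `b = e_{h(b)} b e_{t(b)}`, and the modified preprojective relation is
imposed at every vertex not belonging to `J`. -/
inductive PPRelGam (γ : Q.GamEdge J → kˣ) : Q.FA k → Q.FA k → Prop
  | idem (i j : Q.I) : PPRelGam γ (Q.eF k i * Q.eF k j) (if i = j then Q.eF k i else 0)
  | unit : PPRelGam γ (∑ i : Q.I, Q.eF k i) 1
  | comp (b : Q.DE) : PPRelGam γ (Q.aF k b) (Q.eF k (Q.dhd b) * Q.aF k b * Q.eF k (Q.dtl b))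
  | pre (i : Q.I) (h : i ∉ J) : PPRelGam γ (Q.preprojectorGam k J γ i h) 0

/-- The modified partial preprojective algebra `Π^γ_{Q,J}(k)`. For `J = ∅` this is the
modified preprojective algebra `Π^γ_Q(k)`. -/
abbrev PPAGam (γ : Q.GamEdge J → kˣ) := RingQuot (Q.PPRelGam k J γ)

/-- The quotient map from the free algebra onto `Π^γ_{Q,J}(k)`. -/
def ppGamMk (γ : Q.GamEdge J → kˣ) : Q.FA k →ₐ[k] Q.PPAGam k J γ :=
  RingQuot.mkAlgHom k (Q.PPRelGam k J γ)

/-- The component `e_i Π^γ_{Q,J}(k)[d] e_j` of the grading of `Π^γ_{Q,J}(k)` in which the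
edges have degree `1`: the span of (the images of) all paths of length `d` from `j` to `i`. -/
def ppGamPiece (γ : Q.GamEdge J → kˣ) (d : ℕ) (i j : Q.I) :
    Submodule k (Q.PPAGam k J γ) :=
  Submodule.span k
    {x | ∃ l : List Q.DE, l.length = d ∧
      x = Q.ppGamMk k J γ (Q.eF k i * Q.wordF k l * Q.eF k j)}

/-- The Hilbert series of `Π^γ_{Q,J}(k)`, a matrix-valued power series: the `(i,j)` entry of
the `d`-th coefficient is `dim_k e_i Π^γ_{Q,J}(k)[d] e_j`. -/
def ppGamHilb (γ : Q.GamEdge J → kˣ) : PowerSeries (Matrix Q.I Q.I ℚ) :=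
  PowerSeries.mk fun d => Matrix.of fun i j =>
    (Module.finrank k (Q.ppGamPiece k J γ d i j) : ℚ)

end FinQuiver

/-- The cyclic quiver of type `Ã_{n−1}`: vertices `Fin n` and arrows `a_i` from `i` to
`i + 1` (indices modulo `n`). For `n = 1` this is one vertex with one loop. -/
def cycleQuiver (n : ℕ) [NeZero n] : FinQuiver where
  I := Fin n
  E := Fin n
  hd := fun i => i + 1
  tl := fun i => i

/-- A list of edges of the double quiver contains no subexpression `a_i* a_i`, i.e. no
edge `a_i*` (`Sum.inr i`) immediately followed by the edge `a_i` (`Sum.inl i`). -/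
def NoStarStep {n : ℕ} [NeZero n] (l : List ((cycleQuiver n).DE)) : Prop :=
  l.Chain' fun b c => ∀ m, b = Sum.inr m → c ≠ Sum.inl m

/-!
In `Π^γ_Q(k)` the relation at the vertex `i` of the cycle has just two terms, so it rewrites
`a_i* a_i` as a nonzero multiple of `a_{i-1} a_{i-1}*`. Applied to a word, this moves a starred
letter to the right and so lowers the number of (starred, unstarred) inversions; hence every path
is a combination of paths without a factor `a* a`, while words that are not paths vanish.
Counting the paths of length `d` from `j` to `i` without such a factor by their leftmost letter
gives `N₀ = 1`, `N₁ = C` and `N_{d+2} = C N_{d+1} - N_d`, since each vertex of the cycle has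
exactly one outgoing arrow. These are the coefficients of `(1 - Ct + t²)⁻¹`, and each graded
piece has dimension at most the number of paths spanning it.
-/

theorem PowerSeries.coeff_eq_of_quadratic_mul_eq_one {R : Type*} [Ring R] {c e : R}
    {S : PowerSeries R} (hS : (1 - C c * X + C e * X ^ 2) * S = 1) {u : ℕ → R}
    (h0 : u 0 = 1) (h1 : u 1 = c) (hu : ∀ d, u (d + 2) = c * u (d + 1) - e * u d) (d : ℕ) :
    coeff d S = u d := by
  have hS' : S - C c * (X * S) + C e * (X * (X * S)) = 1 := by
    rw [← hS]
    noncomm_ring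
  have hcoeff := fun m => congrArg (coeff m) hS'
  simp only [map_add, map_sub, coeff_C_mul, coeff_one] at hcoeff
  have hS0 : coeff 0 S = 1 := by simpa using hcoeff 0
  induction d using Nat.twoStepInduction with
  | zero => rw [hS0, h0]
  | one =>
    simpa [h1, sub_eq_zero, coeff_succ_X_mul, ← coeff_zero_eq_constantCoeff, hS0,
      coeff_zero_X_mul] using hcoeff 1
  | more d ih₁ ih₂ =>
    have h := hcoeff (d + 2)
    simp only [coeff_succ_X_mul, if_neg (by omega : d + 2 ≠ 0)] at h
    rw [hu, ← ih₁, ← ih₂, ← sub_eq_zero, ← h]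
    abel

/-- Rewriting a factor `a* a` as a multiple of `a' a'*` lowers this count, so the straightening
terminates. -/
def inversionCount {α β : Type*} : List (α ⊕ β) → ℕ
  | [] => 0
  | b :: l => (if b.isRight then l.countP (·.isLeft) else 0) + inversionCount l

theorem inversionCount_append_inl_inr_lt {α β : Type*} (p s : List (α ⊕ β)) (x x' : α)
    (y y' : β) :
    inversionCount (p ++ Sum.inl x :: Sum.inr y :: s) <
      inversionCount (p ++ Sum.inr y' :: Sum.inl x' :: s) := by
  induction p with
  | nil => simp [inversionCount, List.countP_cons]
  | cons b p ih =>
    simp only [List.cons_append, inversionCount, List.countP_append, List.countP_cons,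
      Sum.isLeft_inl, Sum.isLeft_inr]
    split <;> simp <;> omega

namespace FinQuiver

open Finset

section Paths

variable (Q : FinQuiver)

/-- `Q.IsPath i j l`: the word `l`, read as a product whose leftmost letter is traversed last,
is a path from `j` to `i`. -/
def IsPath : Q.I → Q.I → List Q.DE → Prop
  | i, j, [] => i = j
  | i, j, b :: l => Q.dhd b = i ∧ IsPath (Q.dtl b) j l

def IsStarPair (b c : Q.DE) : Prop := ∃ a, b = Sum.inr a ∧ c = Sum.inl a

def AvoidsStarPairs (l : List Q.DE) : Prop := l.IsChain fun b c => ¬ Q.IsStarPair b c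

def outDegree (i : Q.I) : ℕ := #{a | Q.tl a = i}

open scoped Classical in
/-- The paths of length `d` from `j` to `i` without a factor `a* a` (see `mem_reducedPaths`),
listed by their leftmost letter. -/
def reducedPaths : ℕ → Q.I → Q.I → Finset (List Q.DE)
  | 0, i, j => if i = j then {[]} else ∅
  | d + 1, i, j => ({b | Q.dhd b = i} : Finset Q.DE).biUnion fun b =>
      {t ∈ reducedPaths d (Q.dtl b) j | ∀ c ∈ t.head?, ¬ Q.IsStarPair b c}.image (b :: ·)

def reducedPathCount (d : ℕ) : Matrix Q.I Q.I ℚ :=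
  Matrix.of fun i j => #(Q.reducedPaths d i j)

variable {Q}

theorem avoidsStarPairs_cons {b : Q.DE} {l : List Q.DE} :
    Q.AvoidsStarPairs (b :: l) ↔
      (∀ c ∈ l.head?, ¬ Q.IsStarPair b c) ∧ Q.AvoidsStarPairs l :=
  List.isChain_cons

theorem exists_eq_append_star_pair {l : List Q.DE} (hl : ¬ Q.AvoidsStarPairs l) :
    ∃ p a s, l = p ++ Sum.inr a :: Sum.inl a :: s := by
  rw [AvoidsStarPairs, List.isChain_iff_forall_rel_of_append_cons_cons] at hl
  push Not at hl
  obtain ⟨_, _, p, s, rfl, a, rfl, rfl⟩ := hl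
  exact ⟨p, a, s, rfl⟩

theorem cons_mem_reducedPaths_succ {d : ℕ} {i j : Q.I} {b : Q.DE} {t : List Q.DE} :
    b :: t ∈ Q.reducedPaths (d + 1) i j ↔ Q.dhd b = i ∧
      (∀ c ∈ t.head?, ¬ Q.IsStarPair b c) ∧ t ∈ Q.reducedPaths d (Q.dtl b) j := by
  simp only [reducedPaths, mem_biUnion, mem_filter, mem_univ, true_and, mem_image,
    List.cons.injEq]
  constructor
  · rintro ⟨b, rfl, t, ⟨ht, hbt⟩, rfl, rfl⟩
    exact ⟨rfl, hbt, ht⟩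
  · rintro ⟨hb, hbt, ht⟩
    exact ⟨b, hb, t, ⟨ht, hbt⟩, rfl, rfl⟩

theorem mem_reducedPaths {d : ℕ} {i j : Q.I} {l : List Q.DE} :
    l ∈ Q.reducedPaths d i j ↔ l.length = d ∧ Q.IsPath i j l ∧ Q.AvoidsStarPairs l := by
  induction d generalizing i l with
  | zero =>
    cases l <;> by_cases h : i = j <;> simp [reducedPaths, IsPath, AvoidsStarPairs, h]
  | succ d ih =>
    cases l with
    | nil => simp [reducedPaths]
    | cons b t =>
      rw [cons_mem_reducedPaths_succ, ih, IsPath, avoidsStarPairs_cons, List.length_cons,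
        Nat.add_right_cancel_iff]
      tauto

end Paths

section Counting

open scoped Classical

variable {Q : FinQuiver}

theorem card_reducedPaths_succ (d : ℕ) (i j : Q.I) :
    #(Q.reducedPaths (d + 1) i j) = ∑ b with Q.dhd b = i,
      #{t ∈ Q.reducedPaths d (Q.dtl b) j | ∀ c ∈ t.head?, ¬ Q.IsStarPair b c} := by
  rw [reducedPaths, card_biUnion]
  · exact sum_congr rfl fun b _ => card_image_of_injective _ List.cons_injective
  · intro b _ b' _ hbb'
    simp only [Function.onFun, disjoint_left, mem_image]
    rintro _ ⟨t, -, rfl⟩ ⟨t', -, h⟩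
    exact hbb' (List.cons.inj h).1.symm

theorem card_filter_reducedPaths_inl (d : ℕ) (a : Q.E) (j : Q.I) :
    #{t ∈ Q.reducedPaths d (Q.dtl (Sum.inl a)) j |
        ∀ c ∈ t.head?, ¬ Q.IsStarPair (Sum.inl a) c} =
      #(Q.reducedPaths d (Q.dtl (Sum.inl a)) j) := by
  rw [filter_true_of_mem fun t _ c _ => by simp [IsStarPair]]

theorem card_filter_reducedPaths_inr (d : ℕ) (a : Q.E) (j : Q.I) :
    (#{t ∈ Q.reducedPaths (d + 1) (Q.dtl (Sum.inr a)) j |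
        ∀ c ∈ t.head?, ¬ Q.IsStarPair (Sum.inr a) c} : ℚ) =
      #(Q.reducedPaths (d + 1) (Q.dtl (Sum.inr a)) j) - #(Q.reducedPaths d (Q.tl a) j) := by
  have hstarts : {t ∈ Q.reducedPaths (d + 1) (Q.hd a) j |
      ¬ ∀ c ∈ t.head?, ¬ Q.IsStarPair (Sum.inr a) c} =
        (Q.reducedPaths d (Q.tl a) j).image (Sum.inl a :: ·) := by
    ext l
    rcases l with _ | ⟨b | b, t⟩
    · simp [mem_reducedPaths]
    · rw [mem_filter, cons_mem_reducedPaths_succ, mem_image]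
      constructor
      · rintro ⟨⟨-, -, ht⟩, hab⟩
        obtain rfl : b = a := by simpa [IsStarPair] using hab
        exact ⟨t, ht, rfl⟩
      · rintro ⟨t, ht, h⟩
        obtain ⟨hab, rfl⟩ := List.cons.inj h
        cases Sum.inl.inj hab
        exact ⟨⟨rfl, by simp [IsStarPair], ht⟩, by simp [IsStarPair]⟩
    · simp [IsStarPair]
  have hsplit := card_filter_add_card_filter_not (s := Q.reducedPaths (d + 1) (Q.hd a) j)
    (p := fun t => ∀ c ∈ t.head?, ¬ Q.IsStarPair (Sum.inr a) c)
  rw [hstarts, card_image_of_injective _ List.cons_injective] at hsplit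
  rw [eq_sub_iff_add_eq]
  exact_mod_cast hsplit

theorem adjC_mul_apply (M : Matrix Q.I Q.I ℚ) (i j : Q.I) :
    (Q.adjC * M) i j = ∑ b with Q.dhd b = i, M (Q.dtl b) j := by
  simp only [Matrix.mul_apply, adjC, Matrix.of_apply, Nat.card_eq_fintype_card,
    Fintype.card_subtype]
  rw [← sum_fiberwise' _ Q.dtl (fun v => M v j)]
  refine sum_congr rfl fun v _ => ?_
  rw [sum_const, filter_filter, nsmul_eq_mul]

theorem reducedPathCount_zero : Q.reducedPathCount 0 = 1 := by
  ext i j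
  by_cases h : i = j <;> simp [reducedPathCount, reducedPaths, Matrix.one_apply, h]

theorem reducedPathCount_one : Q.reducedPathCount 1 = Q.adjC := by
  ext i j
  rw [← mul_one Q.adjC, adjC_mul_apply, ← reducedPathCount_zero]
  simp only [reducedPathCount, Matrix.of_apply, card_reducedPaths_succ]
  push_cast
  refine sum_congr rfl fun b _ => ?_
  rw [filter_true_of_mem fun t ht => ?_]
  rw [List.eq_nil_of_length_eq_zero (mem_reducedPaths.1 ht).1]
  simp

theorem reducedPathCount_add_two (d : ℕ) :
    Q.reducedPathCount (d + 2) = Q.adjC * Q.reducedPathCount (d + 1) -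
      Matrix.diagonal (fun i => (Q.outDegree i : ℚ)) * Q.reducedPathCount d := by
  ext i j
  rw [Matrix.sub_apply, adjC_mul_apply, Matrix.diagonal_mul]
  simp only [reducedPathCount, Matrix.of_apply]
  rw [card_reducedPaths_succ (d + 1)]
  push_cast
  rw [sum_filter, sum_filter, Fintype.sum_sum_type, Fintype.sum_sum_type]
  simp only [card_filter_reducedPaths_inl, card_filter_reducedPaths_inr]
  have hstarred : ∑ a, (if Q.dhd (Sum.inr a) = i then
      (#(Q.reducedPaths d (Q.tl a) j) : ℚ) else 0) = Q.outDegree i * #(Q.reducedPaths d i j) := by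
    have htl : ∀ a ∈ ({a | Q.dhd (Sum.inr a) = i} : Finset Q.E),
        (#(Q.reducedPaths d (Q.tl a) j) : ℚ) = #(Q.reducedPaths d i j) := fun a ha => by
      rw [← (mem_filter.1 ha).2]
      rfl
    rw [← sum_filter, sum_congr rfl htl, sum_const, nsmul_eq_mul]
    rfl
  rw [add_sub_assoc, ← hstarred, ← sum_sub_distrib]
  congr 1
  refine sum_congr rfl fun a _ => ?_
  split_ifs <;> simp

end Counting

section Relations

variable {k : Type} [CommRing k] {Q : FinQuiver} {J : Set Q.I} {γ : Q.GamEdge J → kˣ}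

theorem wordF_cons (b : Q.DE) (l : List Q.DE) :
    Q.wordF k (b :: l) = Q.aF k b * Q.wordF k l := by
  simp [wordF]

theorem wordF_append (l₁ l₂ : List Q.DE) :
    Q.wordF k (l₁ ++ l₂) = Q.wordF k l₁ * Q.wordF k l₂ := by
  simp [wordF]

theorem ppGamMk_rel {x y : Q.FA k} (h : Q.PPRelGam k J γ x y) :
    Q.ppGamMk k J γ x = Q.ppGamMk k J γ y :=
  RingQuot.mkAlgHom_rel k h

theorem ppGamMk_surjective : Function.Surjective (Q.ppGamMk k J γ) :=
  RingQuot.mkAlgHom_surjective k _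

theorem ppGamMk_eF_mul_eF (i j : Q.I) :
    Q.ppGamMk k J γ (Q.eF k i) * Q.ppGamMk k J γ (Q.eF k j) =
      if i = j then Q.ppGamMk k J γ (Q.eF k i) else 0 := by
  rw [← map_mul, ppGamMk_rel (PPRelGam.idem i j), apply_ite (Q.ppGamMk k J γ), map_zero]

theorem sum_ppGamMk_eF : ∑ i, Q.ppGamMk k J γ (Q.eF k i) = 1 := by
  rw [← map_sum, ppGamMk_rel PPRelGam.unit, map_one]

theorem ppGamMk_aF (b : Q.DE) :
    Q.ppGamMk k J γ (Q.aF k b) = Q.ppGamMk k J γ (Q.eF k (Q.dhd b)) *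
      Q.ppGamMk k J γ (Q.aF k b) * Q.ppGamMk k J γ (Q.eF k (Q.dtl b)) := by
  rw [← map_mul, ← map_mul, ← ppGamMk_rel (PPRelGam.comp b)]

theorem ppGamMk_eF_mul_aF (i : Q.I) (b : Q.DE) :
    Q.ppGamMk k J γ (Q.eF k i) * Q.ppGamMk k J γ (Q.aF k b) =
      if Q.dhd b = i then Q.ppGamMk k J γ (Q.aF k b) else 0 := by
  conv_lhs => rw [ppGamMk_aF]
  rw [← mul_assoc, ← mul_assoc, ppGamMk_eF_mul_eF]
  by_cases h : Q.dhd b = i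
  · subst h
    rw [if_pos rfl, if_pos rfl, ← ppGamMk_aF]
  · rw [if_neg (Ne.symm h), if_neg h, zero_mul, zero_mul]

theorem ppGamMk_aF_mul_eF (b : Q.DE) (j : Q.I) :
    Q.ppGamMk k J γ (Q.aF k b) * Q.ppGamMk k J γ (Q.eF k j) =
      if Q.dtl b = j then Q.ppGamMk k J γ (Q.aF k b) else 0 := by
  conv_lhs => rw [ppGamMk_aF]
  rw [mul_assoc, ppGamMk_eF_mul_eF]
  by_cases h : Q.dtl b = j
  · subst h
    rw [if_pos rfl, if_pos rfl, ← ppGamMk_aF]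
  · rw [if_neg h, if_neg h, mul_zero]

/-- The relation at `t(a)` then has just two terms, both with unit coefficients. -/
theorem exists_ppGamMk_star_mul_eq_smul {a a' : Q.E} (hJ : Q.tl a ∉ J)
    (hout : ∀ b, Q.tl b = Q.tl a → b = a) (hin : ∀ b, Q.hd b = Q.tl a → b = a')
    (ha' : Q.hd a' = Q.tl a) :
    ∃ c : k, Q.ppGamMk k J γ (Q.aF k (Sum.inr a) * Q.aF k (Sum.inl a)) =
      c • Q.ppGamMk k J γ (Q.aF k (Sum.inl a') * Q.aF k (Sum.inr a')) := by
  have h := ppGamMk_rel (γ := γ) (PPRelGam.pre _ hJ)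
  unfold preprojectorGam at h
  rw [map_zero, map_sub, sub_eq_zero,
    sum_eq_single (⟨a', ha'⟩ : {b // Q.hd b = Q.tl a})
      (fun b _ hb => absurd (Subtype.ext (hin b b.2)) hb) (fun h => absurd (mem_univ _) h),
    sum_eq_single (⟨a, rfl⟩ : {b // Q.tl b = Q.tl a})
      (fun b _ hb => absurd (Subtype.ext (hout b b.2)) hb) (fun h => absurd (mem_univ _) h),
    map_smul, map_smul] at h
  obtain ⟨u, v, huv⟩ : ∃ u v : kˣ, (u : k) • _ = (v : k) • _ := ⟨_, _, h⟩
  refine ⟨(v⁻¹ * u : kˣ), ?_⟩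
  rw [Units.val_mul, mul_smul, huv, ← Units.smul_def, ← Units.smul_def, inv_smul_smul]

end Relations

section PathImages

variable {k : Type} [CommRing k] {Q : FinQuiver} {J : Set Q.I} {γ : Q.GamEdge J → kˣ}

variable (Q γ) in
def pathImage (i : Q.I) (l : List Q.DE) (j : Q.I) : Q.PPAGam k J γ :=
  Q.ppGamMk k J γ (Q.eF k i * Q.wordF k l * Q.eF k j)

variable (Q γ) in
def StraightensStarPairs : Prop :=
  ∀ a : Q.E, ∃ (a' : Q.E) (c : k),
    Q.ppGamMk k J γ (Q.aF k (Sum.inr a) * Q.aF k (Sum.inl a)) =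
      c • Q.ppGamMk k J γ (Q.aF k (Sum.inl a') * Q.aF k (Sum.inr a'))

theorem pathImage_nil (i j : Q.I) :
    Q.pathImage γ i [] j = if i = j then Q.ppGamMk k J γ (Q.eF k i) else 0 := by
  rw [pathImage, wordF, List.map_nil, List.prod_nil, mul_one, map_mul, ppGamMk_eF_mul_eF]

theorem pathImage_cons (i j : Q.I) (b : Q.DE) (l : List Q.DE) :
    Q.pathImage γ i (b :: l) j =
      if Q.dhd b = i then Q.ppGamMk k J γ (Q.aF k b) * Q.pathImage γ (Q.dtl b) l j else 0 := by
  have htail : Q.ppGamMk k J γ (Q.aF k b) * Q.pathImage γ (Q.dtl b) l j =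
      Q.ppGamMk k J γ (Q.aF k b) * Q.ppGamMk k J γ (Q.wordF k l * Q.eF k j) := by
    rw [pathImage, mul_assoc, map_mul, ← mul_assoc, ppGamMk_aF_mul_eF, if_pos rfl]
  rw [htail, pathImage, wordF_cons, mul_assoc, mul_assoc, map_mul, map_mul, ← mul_assoc,
    ppGamMk_eF_mul_aF, ite_mul, zero_mul]

theorem pathImage_eq_zero_of_not_isPath {i j : Q.I} {l : List Q.DE} (hl : ¬ Q.IsPath i j l) :
    Q.pathImage γ i l j = 0 := by
  induction l generalizing i with
  | nil => exact (pathImage_nil i j).trans (if_neg hl)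
  | cons b l ih =>
    rw [pathImage_cons]
    split_ifs with hb
    · rw [ih fun hp => hl ⟨hb, hp⟩, mul_zero]
    · rfl

theorem pathImage_mul_eF (i j m : Q.I) (l : List Q.DE) :
    Q.pathImage γ i l j * Q.ppGamMk k J γ (Q.eF k m) =
      if j = m then Q.pathImage γ i l j else 0 := by
  rw [pathImage, map_mul, mul_assoc, ppGamMk_eF_mul_eF, mul_ite, mul_zero, ← map_mul]

theorem pathImage_mul_aF (i j : Q.I) (l : List Q.DE) (b : Q.DE) :
    Q.pathImage γ i l j * Q.ppGamMk k J γ (Q.aF k b) =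
      if Q.dhd b = j then Q.pathImage γ i (l ++ [b]) (Q.dtl b) else 0 := by
  have happend : Q.pathImage γ i (l ++ [b]) (Q.dtl b) =
      Q.ppGamMk k J γ (Q.eF k i * Q.wordF k l) * Q.ppGamMk k J γ (Q.aF k b) := by
    rw [pathImage, show Q.wordF k (l ++ [b]) = Q.wordF k l * Q.aF k b by simp [wordF],
      ← mul_assoc, map_mul, map_mul, mul_assoc, ppGamMk_aF_mul_eF, if_pos rfl]
  rw [happend, pathImage, map_mul, mul_assoc, ppGamMk_eF_mul_aF, mul_ite, mul_zero]

theorem pathImage_append_cons_cons (i j : Q.I) (p s : List Q.DE) (x y : Q.DE) :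
    Q.pathImage γ i (p ++ x :: y :: s) j =
      Q.ppGamMk k J γ (Q.eF k i * Q.wordF k p) * Q.ppGamMk k J γ (Q.aF k x * Q.aF k y) *
        Q.ppGamMk k J γ (Q.wordF k s * Q.eF k j) := by
  rw [← map_mul, ← map_mul, pathImage, wordF_append, wordF_cons, wordF_cons]
  simp only [mul_assoc]

theorem span_pathImage_eq_top :
    Submodule.span k {x | ∃ i j l, x = Q.pathImage γ i l j} = ⊤ := by
  set M := Submodule.span k {x | ∃ i j l, x = Q.pathImage γ i l j}
  have hgen (g : Q.Gen) :
      M ≤ M.comap (LinearMap.mulRight k (Q.ppGamMk k J γ (FreeAlgebra.ι k g))) := by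
    refine Submodule.span_le.2 ?_
    rintro _ ⟨i, j, l, rfl⟩
    rcases g with m | b
    · change Q.pathImage γ i l j * Q.ppGamMk k J γ (Q.eF k m) ∈ M
      rw [pathImage_mul_eF]
      split_ifs
      exacts [Submodule.subset_span ⟨i, j, l, rfl⟩, M.zero_mem]
    · change Q.pathImage γ i l j * Q.ppGamMk k J γ (Q.aF k b) ∈ M
      rw [pathImage_mul_aF]
      split_ifs
      exacts [Submodule.subset_span ⟨i, _, _, rfl⟩, M.zero_mem]
  have hmul (x : Q.FA k) : ∀ y ∈ M, y * Q.ppGamMk k J γ x ∈ M := by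
    induction x using FreeAlgebra.induction with
    | grade0 r =>
      intro y hy
      rw [AlgHom.commutes, ← Algebra.commutes, ← Algebra.smul_def]
      exact M.smul_mem r hy
    | grade1 g => exact fun y hy => hgen g hy
    | mul a b ha hb =>
      intro y hy
      rw [map_mul, ← mul_assoc]
      exact hb _ (ha _ hy)
    | add a b ha hb =>
      intro y hy
      rw [map_add, mul_add]
      exact M.add_mem (ha _ hy) (hb _ hy)
  have hone : (1 : Q.PPAGam k J γ) ∈ M := by
    rw [← sum_ppGamMk_eF]
    refine M.sum_mem fun i _ => Submodule.subset_span ⟨i, i, [], ?_⟩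
    rw [pathImage_nil, if_pos rfl]
  refine Submodule.eq_top_iff'.2 fun x => ?_
  obtain ⟨z, rfl⟩ := ppGamMk_surjective x
  simpa using hmul z 1 hone

theorem pathImage_mem_span_reducedPaths (hγ : Q.StraightensStarPairs γ) (i j : Q.I)
    (l : List Q.DE) :
    Q.pathImage γ i l j ∈
      Submodule.span k ((Q.pathImage γ i · j) '' ↑(Q.reducedPaths l.length i j)) := by
  induction hN : inversionCount l using Nat.strong_induction_on generalizing l with
  | _ N ih =>
  by_cases hl : Q.AvoidsStarPairs l
  · by_cases hp : Q.IsPath i j l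
    · exact Submodule.subset_span ⟨l, mem_reducedPaths.2 ⟨rfl, hp, hl⟩, rfl⟩
    · rw [pathImage_eq_zero_of_not_isPath hp]
      exact Submodule.zero_mem _
  · obtain ⟨p, a, s, rfl⟩ := exists_eq_append_star_pair hl
    obtain ⟨a', c, hc⟩ := hγ a
    have hlen : (p ++ Sum.inl a' :: Sum.inr a' :: s).length =
        (p ++ Sum.inr a :: Sum.inl a :: s).length := by simp
    rw [pathImage_append_cons_cons, hc, mul_smul_comm, smul_mul_assoc,
      ← pathImage_append_cons_cons, ← hlen]
    exact Submodule.smul_mem _ c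
      (ih _ (hN ▸ inversionCount_append_inl_inr_lt p s a' a a' a) _ rfl)

theorem span_pathImage_avoidsStarPairs_eq_top (hγ : Q.StraightensStarPairs γ) :
    Submodule.span k {x | ∃ i j l, Q.AvoidsStarPairs l ∧ x = Q.pathImage γ i l j} = ⊤ := by
  rw [eq_top_iff, ← span_pathImage_eq_top, Submodule.span_le]
  rintro _ ⟨i, j, l, rfl⟩
  refine Submodule.span_mono ?_ (pathImage_mem_span_reducedPaths hγ i j l)
  rintro _ ⟨l', hl', rfl⟩
  exact ⟨i, j, l', (mem_reducedPaths.1 hl').2.2, rfl⟩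

end PathImages

theorem finrank_ppGamPiece_le_card_reducedPaths {k : Type} [Field k] {Q : FinQuiver}
    {J : Set Q.I} {γ : Q.GamEdge J → kˣ} (hγ : Q.StraightensStarPairs γ) (d : ℕ)
    (i j : Q.I) :
    Module.finrank k (Q.ppGamPiece k J γ d i j) ≤ #(Q.reducedPaths d i j) := by
  classical
  let G := (Q.reducedPaths d i j).image (Q.pathImage γ i · j)
  have hle : Q.ppGamPiece k J γ d i j ≤ Submodule.span k G := by
    refine Submodule.span_le.2 ?_
    rintro _ ⟨l, rfl, rfl⟩
    rw [coe_image]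
    exact pathImage_mem_span_reducedPaths hγ i j l
  calc Module.finrank k (Q.ppGamPiece k J γ d i j)
      ≤ Module.finrank k (Submodule.span k (G : Set (Q.PPAGam k J γ))) :=
        Submodule.finrank_mono hle
    _ ≤ #G := finrank_span_finset_le_card G
    _ ≤ #(Q.reducedPaths d i j) := card_image_le

section CycleQuiver

variable {n : ℕ} [NeZero n]

theorem cycleQuiver_straightensStarPairs {k : Type} [CommRing k]
    (γ : (cycleQuiver n).GamEdge ∅ → kˣ) : (cycleQuiver n).StraightensStarPairs γ :=
  fun (a : Fin n) => ⟨(a - 1 : Fin n), exists_ppGamMk_star_mul_eq_smul (Set.notMem_empty _)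
    (fun _ hb => hb) (fun (b : Fin n) (hb : b + 1 = a) => eq_sub_of_add_eq hb)
    (sub_add_cancel a 1)⟩

theorem cycleQuiver_outDegree (i : (cycleQuiver n).I) : (cycleQuiver n).outDegree i = 1 := by
  refine card_eq_one.2 ⟨i, ?_⟩
  ext a
  simp only [mem_filter, mem_univ, true_and]
  exact mem_singleton.symm

theorem cycleQuiver_coeff_eq_reducedPathCount
    {S : PowerSeries (Matrix (cycleQuiver n).I (cycleQuiver n).I ℚ)}
    (hS : (1 - PowerSeries.C (cycleQuiver n).adjC * PowerSeries.X +
      PowerSeries.C 1 * PowerSeries.X ^ 2) * S = 1) (d : ℕ) :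
    PowerSeries.coeff d S = (cycleQuiver n).reducedPathCount d := by
  refine PowerSeries.coeff_eq_of_quadratic_mul_eq_one hS reducedPathCount_zero
    reducedPathCount_one (fun d => ?_) d
  simp [reducedPathCount_add_two, cycleQuiver_outDegree]

theorem noStarStep_iff_avoidsStarPairs {l : List (cycleQuiver n).DE} :
    NoStarStep l ↔ (cycleQuiver n).AvoidsStarPairs l := by
  change List.IsChain _ l ↔ List.IsChain _ l
  simp only [IsStarPair, not_exists, not_and, ne_eq]

end CycleQuiver

end FinQuiver

/-- Let `Q` be the cyclic quiver of type `Ã_{n−1}` and `γ` any `k^×`-valued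
function on the edges of the double `Q̄`. Then the modified preprojective algebra
`Π^γ_Q(k)` is spanned, as a `k`-vector space, by the paths in `Q̄` containing no
subexpression `a_i* a_i`; consequently `h_{Π^γ_Q(k)}(t) ≤ (1 − Ct + t²)⁻¹` termwise,
where `C` is the adjacency matrix of `Q̄` (the inverse series being the unique two-sided
inverse `S` of `1 − Ct + t²`). -/
theorem cyclic_quiver_modified_preprojective_spanning_and_hilbert_bound
    (k : Type) [Field k] (n : ℕ) [NeZero n] (γ : (cycleQuiver n).DE → kˣ) :
    (Submodule.span k
        {x : (cycleQuiver n).PPAGam k ∅ (fun b => γ b.1) |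
          ∃ (i j : (cycleQuiver n).I) (l : List ((cycleQuiver n).DE)), NoStarStep l ∧
            x = (cycleQuiver n).ppGamMk k ∅ (fun b => γ b.1)
              ((cycleQuiver n).eF k i * (cycleQuiver n).wordF k l * (cycleQuiver n).eF k j)}
        = ⊤) ∧
    ∀ S : PowerSeries (Matrix (cycleQuiver n).I (cycleQuiver n).I ℚ),
      S * (1 - PowerSeries.C
              (cycleQuiver n).adjC * PowerSeries.X
            + PowerSeries.C 1
              * PowerSeries.X ^ 2) = 1 →
      (1 - PowerSeries.C
              (cycleQuiver n).adjC * PowerSeries.X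
            + PowerSeries.C 1
              * PowerSeries.X ^ 2) * S = 1 →
      ∀ (d : ℕ) (i j : (cycleQuiver n).I),
        (PowerSeries.coeff d ((cycleQuiver n).ppGamHilb k ∅ (fun b => γ b.1))) i j ≤
          (PowerSeries.coeff d S) i j := by
  have hγ := FinQuiver.cycleQuiver_straightensStarPairs (k := k) fun b => γ b.1
  refine ⟨?_, fun S _ hS d i j => ?_⟩
  · rw [eq_top_iff, ← FinQuiver.span_pathImage_avoidsStarPairs_eq_top hγ]
    refine Submodule.span_mono ?_
    rintro _ ⟨i, j, l, hl, rfl⟩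
    exact ⟨i, j, l, FinQuiver.noStarStep_iff_avoidsStarPairs.2 hl, rfl⟩
  · rw [FinQuiver.cycleQuiver_coeff_eq_reducedPathCount hS]
    simp only [FinQuiver.ppGamHilb, PowerSeries.coeff_mk, Matrix.of_apply,
      FinQuiver.reducedPathCount]
    exact_mod_cast FinQuiver.finrank_ppGamPiece_le_card_reducedPaths hγ d i j

end
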